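/- arXiv:1608.08558 — 4 statements merged into one kernel-verified Lean document; each statement's English description precedes it below -/
import Mathlib

section
/- Suppose Assumptions 2.1 and 3.1 hold and that Ψ^ℓ = P_ℓ ∘ Ψ. Then for every n ≥ 1 there is a constant c (depending on n but not on ℓ) such that ‖(I − P_ℓ) C̄_n‖_{𝓗⊗𝓗} ≤ c · h_ℓ^{β/2} for all ℓ ≥ 0, where C̄_n = Cov[v̄_n] is the MFEnKF prediction covariance. -/
open MeasureTheory ProbabilityTheory ContinuousLinearMap
open scoped RealInnerProductSpace ENNReal

/-- The `L^p(Ω;𝓗)`-norm of a random variable, for a real exponent `p`. -/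
noncomputable def lpNorm {Ω : Type*} [MeasurableSpace Ω] (μ : Measure Ω)
    {H : Type*} [NormedAddCommGroup H] (p : ℝ) (u : Ω → H) : ℝ :=
  (∫ ω, ‖u ω‖ ^ p ∂μ) ^ (1 / p)

/-- Hilbert–Schmidt norm of an operator on `𝓗`, computed in the orthonormal basis `e`. -/
noncomputable def hsNorm {H : Type*} [NormedAddCommGroup H] [InnerProductSpace ℝ H]
    (e : HilbertBasis ℕ ℝ H) (T : H →L[ℝ] H) : ℝ :=
  Real.sqrt (∑' k, ‖T (e k)‖ ^ 2)

/-! `(I - P_ℓ) C̄_n` is the cross-covariance `𝔼[X ⊗ (I - P_ℓ) X]` of the centred forecast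
`X = v̄_n - 𝔼 v̄_n`, so Cauchy–Schwarz in `L²(Ω)` for each basis vector and Bessel's inequality
bound its Hilbert–Schmidt norm by `‖X‖_{L²} ‖(I - P_ℓ) X‖_{L²}`. Centring does not increase the
`L²` norm, and `(I - P_ℓ) v̄_n = Ψ(v̂̄_{n-1}) - Ψ^ℓ(v̂̄_{n-1})` is `O(h_ℓ^{β/2})` by Assumption 3.1.
The analysis states stay in `L²` because `Ψ` preserves `L^p` and the update is affine with bounded
operators. -/

section LpNorm

variable {Ω : Type*} [MeasurableSpace Ω] {μ : Measure Ω}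

lemma lpNorm_nonneg {E : Type*} [NormedAddCommGroup E] (p : ℝ) (f : Ω → E) :
    0 ≤ lpNorm μ p f :=
  Real.rpow_nonneg (integral_nonneg fun _ => by positivity) _

lemma lpNorm_two_eq_sqrt {E : Type*} [NormedAddCommGroup E] (f : Ω → E) :
    lpNorm μ 2 f = √(∫ ω, ‖f ω‖ ^ 2 ∂μ) := by
  simp only [_root_.lpNorm, Real.rpow_two, Real.sqrt_eq_rpow, one_div]

lemma lpNorm_two_sub_integral_le [IsProbabilityMeasure μ]
    {E : Type*} [NormedAddCommGroup E] [InnerProductSpace ℝ E] [CompleteSpace E]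
    {f : Ω → E} (hf : MemLp f 2 μ) :
    lpNorm μ 2 (fun ω => f ω - ∫ x, f x ∂μ) ≤ lpNorm μ 2 f := by
  set m := ∫ x, f x ∂μ
  have hf_int : Integrable f μ := hf.integrable one_le_two
  have hf_sq : Integrable (fun ω => ‖f ω‖ ^ 2) μ := hf.integrable_norm_pow two_ne_zero
  have hinner : Integrable (fun ω => 2 * ⟪m, f ω⟫) μ := (hf_int.const_inner m).const_mul 2
  have hexpand : ∫ ω, ‖f ω - m‖ ^ 2 ∂μ = ∫ ω, ‖f ω‖ ^ 2 ∂μ - ‖m‖ ^ 2 := by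
    calc ∫ ω, ‖f ω - m‖ ^ 2 ∂μ = ∫ ω, (‖f ω‖ ^ 2 - 2 * ⟪m, f ω⟫ + ‖m‖ ^ 2) ∂μ := by
          simp only [norm_sub_sq_real, real_inner_comm]
      _ = ∫ ω, ‖f ω‖ ^ 2 ∂μ - 2 * ⟪m, m⟫ + ‖m‖ ^ 2 := by
          rw [integral_add (f := fun ω => ‖f ω‖ ^ 2 - 2 * ⟪m, f ω⟫) (hf_sq.sub hinner)
            (integrable_const _), integral_sub hf_sq hinner, integral_const_mul, integral_inner hf_int, integral_const, probReal_univ, one_smul]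
      _ = ∫ ω, ‖f ω‖ ^ 2 ∂μ - ‖m‖ ^ 2 := by rw [real_inner_self_eq_norm_sq]; ring
  rw [lpNorm_two_eq_sqrt, lpNorm_two_eq_sqrt, hexpand]
  exact Real.sqrt_le_sqrt (sub_le_self _ (sq_nonneg _))

lemma norm_integral_smul_le_lpNorm_mul_lpNorm
    {E : Type*} [NormedAddCommGroup E] [NormedSpace ℝ E]
    {φ : Ω → ℝ} {f : Ω → E} (hφ : MemLp φ 2 μ) (hf : MemLp f 2 μ) :
    ‖∫ ω, φ ω • f ω ∂μ‖ ≤ lpNorm μ 2 φ * lpNorm μ 2 f := by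
  calc ‖∫ ω, φ ω • f ω ∂μ‖ ≤ ∫ ω, ‖φ ω‖ * ‖f ω‖ ∂μ := by
        simpa only [norm_smul] using norm_integral_le_integral_norm (fun ω => φ ω • f ω)
    _ ≤ lpNorm μ 2 φ * lpNorm μ 2 f :=
        integral_mul_le_Lp_mul_Lq_of_nonneg Real.HolderConjugate.two_two
          (.of_forall fun _ => norm_nonneg _) (.of_forall fun _ => norm_nonneg _)
          (by simpa using hφ.norm) (by simpa using hf.norm)

end LpNorm

section HilbertSchmidt

variable {Ω : Type*} [MeasurableSpace Ω] {μ : Measure Ω}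
  {E : Type*} [NormedAddCommGroup E] [InnerProductSpace ℝ E]

lemma integrable_inner_smul {F : Type*} [NormedAddCommGroup F] [NormedSpace ℝ F]
    {f : Ω → E} {g : Ω → F} (hf : MemLp f 2 μ) (hg : MemLp g 2 μ) (w : E) :
    Integrable (fun ω => ⟪f ω, w⟫ • g ω) μ :=
  memLp_one_iff_integrable.1 (hg.smul (hf.inner_const w))

lemma Orthonormal.sum_integral_inner_sq_le {ι : Type*} {v : ι → E} (hv : Orthonormal ℝ v)
    {f : Ω → E} (hf : MemLp f 2 μ) (s : Finset ι) :
    ∑ i ∈ s, ∫ ω, ⟪f ω, v i⟫ ^ 2 ∂μ ≤ ∫ ω, ‖f ω‖ ^ 2 ∂μ := by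
  have hint : ∀ i, Integrable (fun ω => ⟪f ω, v i⟫ ^ 2) μ :=
    fun i => (hf.inner_const (v i)).integrable_sq
  rw [← integral_finsetSum _ fun i _ => hint i]
  refine integral_mono (integrable_finsetSum _ fun i _ => hint i)
    (hf.integrable_norm_pow two_ne_zero) fun ω => ?_
  simpa [sq_abs, real_inner_comm] using hv.sum_inner_products_le (s := s) (f ω)

lemma hsNorm_le_lpNorm_mul_lpNorm (e : HilbertBasis ℕ ℝ E) {T : E →L[ℝ] E} {f g : Ω → E}
    (hf : MemLp f 2 μ) (hg : MemLp g 2 μ) (hT : ∀ w, T w = ∫ ω, ⟪f ω, w⟫ • g ω ∂μ) :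
    hsNorm e T ≤ lpNorm μ 2 f * lpNorm μ 2 g := by
  set a : ℕ → ℝ := fun k => ∫ ω, ⟪f ω, e k⟫ ^ 2 ∂μ
  set B : ℝ := ∫ ω, ‖g ω‖ ^ 2 ∂μ
  have ha_nonneg : ∀ k, 0 ≤ a k := fun k => integral_nonneg fun _ => sq_nonneg _
  have hB_nonneg : 0 ≤ B := integral_nonneg fun _ => sq_nonneg _
  have hbessel : ∀ n, ∑ k ∈ Finset.range n, a k ≤ ∫ ω, ‖f ω‖ ^ 2 ∂μ :=
    fun n => e.orthonormal.sum_integral_inner_sq_le hf _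
  have ha : Summable a := summable_of_sum_range_le ha_nonneg hbessel
  have hTe : ∀ k, ‖T (e k)‖ ^ 2 ≤ a k * B := by
    intro k
    have hle := norm_integral_smul_le_lpNorm_mul_lpNorm (hf.inner_const (e k)) hg
    simp only [lpNorm_two_eq_sqrt, Real.norm_eq_abs, sq_abs, ← hT] at hle
    rwa [← Real.sqrt_mul (ha_nonneg k), Real.le_sqrt (norm_nonneg _) (by positivity)] at hle
  rw [hsNorm, lpNorm_two_eq_sqrt, lpNorm_two_eq_sqrt,
    ← Real.sqrt_mul (integral_nonneg fun _ => sq_nonneg _)]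
  refine Real.sqrt_le_sqrt ?_
  calc ∑' k, ‖T (e k)‖ ^ 2 ≤ ∑' k, a k * B :=
        (ha.mul_right B).of_nonneg_of_le (fun _ => sq_nonneg _) hTe |>.tsum_le_tsum hTe
          (ha.mul_right B)
    _ = (∑' k, a k) * B := tsum_mul_right
    _ ≤ (∫ ω, ‖f ω‖ ^ 2 ∂μ) * B :=
        mul_le_mul_of_nonneg_right (ha.tsum_le_of_sum_range_le hbessel) hB_nonneg

end HilbertSchmidt

lemma memLp_mfenkf_analysis {Ω : Type*} [MeasurableSpace Ω] {μ : Measure Ω} [IsFiniteMeasure μ]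
    {E F : Type*} [NormedAddCommGroup E] [NormedSpace ℝ E] [NormedAddCommGroup F]
    [NormedSpace ℝ F] {p : ℝ≥0∞} {Ψ : (Ω → E) → Ω → E}
    (hΨ : ∀ u, MemLp u p μ → MemLp (Ψ u) p μ) {Hop : E →L[ℝ] F} {K : ℕ → F →L[ℝ] E}
    {y : ℕ → F} {η : ℕ → Ω → F} (hη : ∀ n, MemLp (η n) p μ) {vbar vhat : ℕ → Ω → E}
    (h0 : MemLp (vhat 0) p μ) (hpred : ∀ n, vbar (n + 1) = Ψ (vhat n))
    (hupd : ∀ n ω, vhat (n + 1) ω =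
      vbar (n + 1) ω - K (n + 1) (Hop (vbar (n + 1) ω)) + K (n + 1) (y (n + 1) + η (n + 1) ω))
    (n : ℕ) : MemLp (vhat n) p μ := by
  induction n with
  | zero => exact h0
  | succ n ih =>
    have hvbar : MemLp (vbar (n + 1)) p μ := by rw [hpred n]; exact hΨ _ ih
    rw [funext (hupd n)]
    have hgain : MemLp (fun ω => K (n + 1) (Hop (vbar (n + 1) ω))) p μ :=
      ((K (n + 1)).comp Hop).comp_memLp' hvbar
    have hinnov : MemLp (fun ω => K (n + 1) (y (n + 1) + η (n + 1) ω)) p μ :=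
      (K (n + 1)).comp_memLp' ((memLp_const (y (n + 1))).add (hη (n + 1)))
    exact (hvbar.sub hgain).add hinnov

theorem stmt4_general
    {Ω : Type*} [MeasurableSpace Ω] (μ : Measure Ω) [IsProbabilityMeasure μ]
    {H : Type*} [NormedAddCommGroup H] [InnerProductSpace ℝ H] [CompleteSpace H]
    (e : HilbertBasis ℕ ℝ H)
    -- hierarchy: `N_ℓ ≂ κ^ℓ`, `h_ℓ ≂ N_ℓ^{−1/d}`, `P_ℓ` projection on first `N_ℓ` modes
    (d : ℕ)
    (N : ℕ → ℕ) (h : ℕ → ℝ)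
    (ch₁ ch₂ : ℝ) (hch₁ : 0 < ch₁)
    (hh : ∀ ℓ : ℕ, ch₁ * (N ℓ : ℝ) ^ (-(1 : ℝ) / d) ≤ h ℓ ∧
      h ℓ ≤ ch₂ * (N ℓ : ℝ) ^ (-(1 : ℝ) / d))
    (P : ℕ → H →L[ℝ] H)
    -- rates
    (β : ℝ)
    -- observation model
    {m : ℕ}
    (Hop : H →L[ℝ] EuclideanSpace ℝ (Fin m))
    -- Assumption 2.1 on `Ψ` and the solvers `Ψ^ℓ = P_ℓ ∘ Ψ`
    (Ψ : (Ω → H) → Ω → H) (Ψl : ℕ → (Ω → H) → Ω → H)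
    (hΨl : ∀ ℓ u ω, Ψl ℓ u ω = P ℓ (Ψ u ω))
    (hmem : ∀ p : ℝ, 2 ≤ p → ∀ u : Ω → H, MemLp u (ENNReal.ofReal p) μ →
      MemLp (Ψ u) (ENNReal.ofReal p) μ)
    -- Assumption 3.1
    (cA : ℝ)
    (hA1 : ∀ p : ℝ, 2 ≤ p → ∀ ℓ, ∀ u : Ω → H,
      lpNorm μ p (fun ω => Ψl ℓ u ω - Ψ u ω) ≤ cA * h ℓ ^ (β / 2))
    -- observations and perturbation noise
    (y : ℕ → EuclideanSpace ℝ (Fin m))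
    (η : ℕ → Ω → EuclideanSpace ℝ (Fin m))
    (hη : ∀ n, ∀ p : ℝ, 2 ≤ p → MemLp (η n) (ENNReal.ofReal p) μ)
    -- the MFEnKF process
    (vbar vhat : ℕ → Ω → H)
    (mbar : ℕ → H)
    (Cbar : ℕ → H →L[ℝ] H)
    (Kbar : ℕ → EuclideanSpace ℝ (Fin m) →L[ℝ] H)
    (h0 : ∀ p : ℝ, 2 ≤ p → MemLp (vhat 0) (ENNReal.ofReal p) μ)
    (hpred : ∀ n, vbar (n + 1) = Ψ (vhat n))
    (hmean : ∀ n, mbar (n + 1) = ∫ ω, vbar (n + 1) ω ∂μ)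
    (hcov : ∀ n, ∀ w : H, Cbar (n + 1) w =
      ∫ ω, ⟪vbar (n + 1) ω - mbar (n + 1), w⟫ • (vbar (n + 1) ω - mbar (n + 1)) ∂μ)
    (hupd : ∀ n ω, vhat (n + 1) ω =
      vbar (n + 1) ω - Kbar (n + 1) (Hop (vbar (n + 1) ω))
        + Kbar (n + 1) (y (n + 1) + η (n + 1) ω)) :
    ∀ n : ℕ, 1 ≤ n → ∃ c : ℝ, 0 < c ∧ ∀ ℓ : ℕ,
      hsNorm e ((ContinuousLinearMap.id ℝ H - P ℓ) ∘L Cbar n) ≤ c * h ℓ ^ (β / 2) := by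
  intro n hn
  obtain ⟨k, rfl⟩ : ∃ k, n = k + 1 := Nat.exists_eq_add_of_le' hn
  have hvbar : MemLp (vbar (k + 1)) 2 μ := by
    have hvhat := memLp_mfenkf_analysis (hmem 2 le_rfl) (fun n => hη n 2 le_rfl) (h0 2 le_rfl)
      hpred hupd k
    simpa [hpred k] using hmem 2 le_rfl _ hvhat
  set X : Ω → H := fun ω => vbar (k + 1) ω - mbar (k + 1)
  have hX : MemLp X 2 μ := hvbar.sub (memLp_const _)
  refine ⟨lpNorm μ 2 X * |cA| + 1,
    add_pos_of_nonneg_of_pos (mul_nonneg (lpNorm_nonneg _ _) (abs_nonneg _)) one_pos, fun ℓ => ?_⟩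
  set Q : H →L[ℝ] H := ContinuousLinearMap.id ℝ H - P ℓ
  have hT : ∀ w, (Q ∘L Cbar (k + 1)) w = ∫ ω, ⟪X ω, w⟫ • Q (X ω) ∂μ := by
    intro w
    rw [comp_apply, hcov k w, ← Q.integral_comp_comm (integrable_inner_smul hX hX w)]
    simp only [map_smul, X]
  have hQX : lpNorm μ 2 (fun ω => Q (X ω)) ≤ cA * h ℓ ^ (β / 2) := calc
    lpNorm μ 2 (fun ω => Q (X ω))
        = lpNorm μ 2 (fun ω => Q (vbar (k + 1) ω) - ∫ x, Q (vbar (k + 1) x) ∂μ) := by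
          rw [Q.integral_comp_comm (hvbar.integrable one_le_two), ← hmean k]
          simp only [X, map_sub]
    _ ≤ lpNorm μ 2 (fun ω => Q (vbar (k + 1) ω)) :=
          lpNorm_two_sub_integral_le (Q.comp_memLp' hvbar)
    _ = lpNorm μ 2 (fun ω => Ψl ℓ (vhat k) ω - Ψ (vhat k) ω) := by
          simp only [_root_.lpNorm, Q, hΨl, hpred, sub_apply, id_apply, norm_sub_rev]
    _ ≤ cA * h ℓ ^ (β / 2) := hA1 2 le_rfl ℓ (vhat k)
  have hh_nonneg : 0 ≤ h ℓ ^ (β / 2) :=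
    Real.rpow_nonneg ((mul_nonneg hch₁.le (Real.rpow_nonneg (Nat.cast_nonneg _) _)).trans
      (hh ℓ).1) _
  calc hsNorm e (Q ∘L Cbar (k + 1))
      ≤ lpNorm μ 2 X * lpNorm μ 2 (fun ω => Q (X ω)) :=
        hsNorm_le_lpNorm_mul_lpNorm e hX (Q.comp_memLp' hX) hT
    _ ≤ lpNorm μ 2 X * (cA * h ℓ ^ (β / 2)) :=
        mul_le_mul_of_nonneg_left hQX (lpNorm_nonneg _ _)
    _ ≤ (lpNorm μ 2 X * |cA| + 1) * h ℓ ^ (β / 2) := by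
        nlinarith [le_abs_self cA, mul_nonneg (lpNorm_nonneg (μ := μ) 2 X) hh_nonneg]

/-- under Assumptions 2.1 and 3.1 with `Ψ^ℓ = P_ℓ ∘ Ψ`, for every `n ≥ 1`
there is a constant `c` (depending on `n` but not on `ℓ`) with
`‖(I − P_ℓ) C̄_n‖_{𝓗⊗𝓗} ≤ c h_ℓ^{β/2}` for all `ℓ`, where `C̄_n` is the MFEnKF
prediction covariance. -/
theorem stmt4
    {Ω : Type*} [MeasurableSpace Ω] (μ : Measure Ω) [IsProbabilityMeasure μ]
    {H : Type*} [NormedAddCommGroup H] [InnerProductSpace ℝ H] [CompleteSpace H]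
    (e : HilbertBasis ℕ ℝ H)
    -- hierarchy: `N_ℓ ≂ κ^ℓ`, `h_ℓ ≂ N_ℓ^{−1/d}`, `P_ℓ` projection on first `N_ℓ` modes
    (κ : ℝ) (hκ : 1 < κ) (d : ℕ) (hd : 1 ≤ d)
    (N : ℕ → ℕ) (h : ℕ → ℝ)
    (cN₁ cN₂ ch₁ ch₂ : ℝ) (hcN₁ : 0 < cN₁) (hch₁ : 0 < ch₁)
    (hN : ∀ ℓ : ℕ, cN₁ * κ ^ ℓ ≤ (N ℓ : ℝ) ∧ (N ℓ : ℝ) ≤ cN₂ * κ ^ ℓ)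
    (hh : ∀ ℓ : ℕ, ch₁ * (N ℓ : ℝ) ^ (-(1 : ℝ) / d) ≤ h ℓ ∧
      h ℓ ≤ ch₂ * (N ℓ : ℝ) ^ (-(1 : ℝ) / d))
    (P : ℕ → H →L[ℝ] H)
    (hP : ∀ ℓ k, P ℓ (e k) = if k < N ℓ then (e k : H) else 0)
    -- rates
    (β γ : ℝ) (hβ : 0 < β) (hγ : 0 < γ)
    -- observation model
    {m : ℕ}
    (Hop : H →L[ℝ] EuclideanSpace ℝ (Fin m))
    (Γ : EuclideanSpace ℝ (Fin m) →L[ℝ] EuclideanSpace ℝ (Fin m))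
    (hΓsa : IsSelfAdjoint Γ)
    (hΓpd : ∀ x : EuclideanSpace ℝ (Fin m), x ≠ 0 → 0 < ⟪x, Γ x⟫)
    -- Assumption 2.1 on `Ψ` and the solvers `Ψ^ℓ = P_ℓ ∘ Ψ`
    (Ψ : (Ω → H) → Ω → H) (Ψl : ℕ → (Ω → H) → Ω → H) (cΨ : ℝ)
    (hΨl : ∀ ℓ u ω, Ψl ℓ u ω = P ℓ (Ψ u ω))
    (hlip : ∀ p : ℝ, 2 ≤ p → ∀ u v : Ω → H,
      lpNorm μ p (fun ω => Ψ u ω - Ψ v ω) ≤ cΨ * lpNorm μ p (fun ω => u ω - v ω))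
    (hbd : ∀ p : ℝ, 2 ≤ p → ∀ u : Ω → H,
      lpNorm μ p (Ψ u) ^ p ≤ cΨ * (1 + lpNorm μ p u ^ p))
    (hmem : ∀ p : ℝ, 2 ≤ p → ∀ u : Ω → H, MemLp u (ENNReal.ofReal p) μ →
      MemLp (Ψ u) (ENNReal.ofReal p) μ)
    (hlipl : ∀ p : ℝ, 2 ≤ p → ∀ ℓ, ∀ u v : Ω → H,
      lpNorm μ p (fun ω => Ψl ℓ u ω - Ψl ℓ v ω) ≤ cΨ * lpNorm μ p (fun ω => u ω - v ω))
    (hbdl : ∀ p : ℝ, 2 ≤ p → ∀ ℓ, ∀ u : Ω → H,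
      lpNorm μ p (Ψl ℓ u) ^ p ≤ cΨ * (1 + lpNorm μ p u ^ p))
    -- Assumption 3.1
    (cA : ℝ)
    (hA1 : ∀ p : ℝ, 2 ≤ p → ∀ ℓ, ∀ u : Ω → H,
      lpNorm μ p (fun ω => Ψl ℓ u ω - Ψ u ω) ≤ cA * h ℓ ^ (β / 2))
    -- observations and perturbation noise
    (y : ℕ → EuclideanSpace ℝ (Fin m))
    (η : ℕ → Ω → EuclideanSpace ℝ (Fin m))
    (hη : ∀ n, ∀ p : ℝ, 2 ≤ p → MemLp (η n) (ENNReal.ofReal p) μ)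
    -- the MFEnKF process
    (vbar vhat : ℕ → Ω → H)
    (mbar : ℕ → H)
    (Cbar : ℕ → H →L[ℝ] H)
    (Kbar : ℕ → EuclideanSpace ℝ (Fin m) →L[ℝ] H)
    (h0 : ∀ p : ℝ, 2 ≤ p → MemLp (vhat 0) (ENNReal.ofReal p) μ)
    (hA2 : ∀ p : ℝ, 2 ≤ p → ∀ ℓ,
      lpNorm μ p (fun ω => vhat 0 ω - P ℓ (vhat 0 ω)) ≤ cA * h ℓ ^ (β / 2))
    (hpred : ∀ n, vbar (n + 1) = Ψ (vhat n))
    (hmean : ∀ n, mbar (n + 1) = ∫ ω, vbar (n + 1) ω ∂μ)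
    (hcov : ∀ n, ∀ w : H, Cbar (n + 1) w =
      ∫ ω, ⟪vbar (n + 1) ω - mbar (n + 1), w⟫ • (vbar (n + 1) ω - mbar (n + 1)) ∂μ)
    (hgain : ∀ n, Kbar (n + 1) ∘L
        (Hop ∘L Cbar (n + 1) ∘L (ContinuousLinearMap.adjoint Hop) + Γ)
      = Cbar (n + 1) ∘L (ContinuousLinearMap.adjoint Hop))
    (hupd : ∀ n ω, vhat (n + 1) ω =
      vbar (n + 1) ω - Kbar (n + 1) (Hop (vbar (n + 1) ω))
        + Kbar (n + 1) (y (n + 1) + η (n + 1) ω)) :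
    ∀ n : ℕ, 1 ≤ n → ∃ c : ℝ, 0 < c ∧ ∀ ℓ : ℕ,
      hsNorm e ((ContinuousLinearMap.id ℝ H - P ℓ) ∘L Cbar n) ≤ c * h ℓ ^ (β / 2) :=
  stmt4_general μ e d N h ch₁ ch₂ hch₁ hh P β Hop Ψ Ψl hΨl hmem cA hA1 y η hη vbar vhat mbar Cbar
    Kbar h0 hpred hmean hcov hupd
end

section
/- Let C be a self-adjoint Hilbert–Schmidt operator on 𝓗, let C̄ be a positive semidefinite self-adjoint Hilbert–Schmidt operator on 𝓗, and let H: 𝓗 → ℝ^m be bounded linear with adjoint H*. Let A := H C H* ∈ ℝ^{m×m} (a symmetric matrix) with eigendecomposition A = Σ_i λ_i q_i q_iᵀ, and let Ã := Σ_{i: λ_i ≥ 0} λ_i q_i q_iᵀ be its positive part. Then ‖Ã − A‖_F ≤ √m · ‖H‖_{op}² · ‖C − C̄‖_{𝓗⊗𝓗}, where ‖·‖_F denotes the Frobenius norm on ℝ^{m×m}. -/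
open MeasureTheory ContinuousLinearMap Finset
open scoped RealInnerProductSpace ENNReal

/-- Frobenius (Hilbert–Schmidt) norm of an operator on `ℝ^m`. -/
noncomputable def frobNorm {m : ℕ}
    (T : EuclideanSpace ℝ (Fin m) →L[ℝ] EuclideanSpace ℝ (Fin m)) : ℝ :=
  Real.sqrt (∑ i : Fin m, ‖T (EuclideanSpace.single i (1 : ℝ))‖ ^ 2)

/-- The rank-one operator `x xᵀ` (i.e. `q_i q_iᵀ`). -/
noncomputable def outer {E : Type*} [NormedAddCommGroup E] [InnerProductSpace ℝ E]
    (x : E) : E →L[ℝ] E :=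
  (innerSL ℝ x).smulRight x

lemma hsNorm_nonneg {H : Type*} [NormedAddCommGroup H] [InnerProductSpace ℝ H]
    (e : HilbertBasis ℕ ℝ H) (T : H →L[ℝ] H) : 0 ≤ hsNorm e T := Real.sqrt_nonneg _

/-- Operator norm bounded by Hilbert–Schmidt norm, for self-adjoint `T`. -/
lemma key_norm_le {H : Type*} [NormedAddCommGroup H] [InnerProductSpace ℝ H] [CompleteSpace H]
    (e : HilbertBasis ℕ ℝ H) (T : H →L[ℝ] H) (hT : IsSelfAdjoint T)
    (hHS : Summable fun k => ‖T (e k)‖ ^ 2) (u : H) :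
    ‖T u‖ ≤ hsNorm e T * ‖u‖ := by
  have hadj : ContinuousLinearMap.adjoint T = T := isSelfAdjoint_iff'.mp hT
  have hpar : ‖T u‖ ^ 2 = ∑' k, ⟪T u, e k⟫ * ⟪e k, T u⟫ := by
    rw [e.tsum_inner_mul_inner (T u) (T u), real_inner_self_eq_norm_sq]
  have hterm : ∀ k, ⟪T u, e k⟫ * ⟪e k, T u⟫ ≤ ‖T (e k)‖ ^ 2 * ‖u‖ ^ 2 := by
    intro k
    have h1 : ⟪e k, T u⟫ = ⟪T (e k), u⟫ := by
      have h := ContinuousLinearMap.adjoint_inner_left T u (e k)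
      rw [hadj] at h
      exact h.symm
    have h2 : ⟪T u, e k⟫ = ⟪T (e k), u⟫ := by
      rw [real_inner_comm, h1]
    rw [h1, h2, ← sq]
    calc ⟪T (e k), u⟫ ^ 2 ≤ (‖T (e k)‖ * ‖u‖) ^ 2 := by
          apply sq_le_sq'
          · exact neg_le_of_abs_le (abs_real_inner_le_norm _ _)
          · exact le_of_abs_le (abs_real_inner_le_norm _ _)
      _ = ‖T (e k)‖ ^ 2 * ‖u‖ ^ 2 := by ring
  have hsum2 : Summable fun k => ‖T (e k)‖ ^ 2 * ‖u‖ ^ 2 := hHS.mul_right _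
  have hsum1 : Summable fun k => ⟪T u, e k⟫ * ⟪e k, T u⟫ := e.summable_inner_mul_inner _ _
  have hle : ‖T u‖ ^ 2 ≤ (∑' k, ‖T (e k)‖ ^ 2) * ‖u‖ ^ 2 := by
    rw [hpar, ← tsum_mul_right]
    exact Summable.tsum_le_tsum hterm hsum1 hsum2
  have h0 : 0 ≤ ∑' k, ‖T (e k)‖ ^ 2 := tsum_nonneg fun k => sq_nonneg _
  calc ‖T u‖ = Real.sqrt (‖T u‖ ^ 2) := (Real.sqrt_sq (norm_nonneg _)).symm
    _ ≤ Real.sqrt ((∑' k, ‖T (e k)‖ ^ 2) * ‖u‖ ^ 2) := Real.sqrt_le_sqrt hle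
    _ = hsNorm e T * ‖u‖ := by
        rw [Real.sqrt_mul h0, Real.sqrt_sq (norm_nonneg _)]; rfl

/-- for a self-adjoint Hilbert–Schmidt `C`, a positive semidefinite
self-adjoint Hilbert–Schmidt `C̄` and bounded linear `H : 𝓗 → ℝ^m`, with
`A = H C H* = Σ λ_i q_i q_iᵀ` and positive part `Ã = Σ_{λ_i ≥ 0} λ_i q_i q_iᵀ`,
one has `‖Ã − A‖_F ≤ √m ‖H‖² ‖C − C̄‖_{𝓗⊗𝓗}`. -/
theorem stmt5
    {H : Type*} [NormedAddCommGroup H] [InnerProductSpace ℝ H] [CompleteSpace H]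
    (e : HilbertBasis ℕ ℝ H)
    {m : ℕ} (Hop : H →L[ℝ] EuclideanSpace ℝ (Fin m))
    (C Cb : H →L[ℝ] H)
    (hCsa : IsSelfAdjoint C) (hCbsa : IsSelfAdjoint Cb)
    (hCbpos : ∀ x : H, 0 ≤ ⟪x, Cb x⟫)
    (hCHS : Summable fun k => ‖C (e k)‖ ^ 2)
    (hCbHS : Summable fun k => ‖Cb (e k)‖ ^ 2)
    (lam : Fin m → ℝ) (q : Fin m → EuclideanSpace ℝ (Fin m))
    (hq : Orthonormal ℝ q)
    (A : EuclideanSpace ℝ (Fin m) →L[ℝ] EuclideanSpace ℝ (Fin m))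
    (hA : A = Hop ∘L C ∘L (ContinuousLinearMap.adjoint Hop))
    (hAeig : A = ∑ i : Fin m, lam i • outer (q i))
    (Atil : EuclideanSpace ℝ (Fin m) →L[ℝ] EuclideanSpace ℝ (Fin m))
    (hAtil : Atil = ∑ i ∈ Finset.univ.filter (fun i => 0 ≤ lam i), lam i • outer (q i)) :
    frobNorm (Atil - A) ≤ Real.sqrt m * ‖Hop‖ ^ 2 * hsNorm e (C - Cb) := by
  set T : H →L[ℝ] H := C - Cb with hT
  set B : ℝ := ‖Hop‖ ^ 2 * hsNorm e T with hBdef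
  have hB0 : 0 ≤ B := mul_nonneg (sq_nonneg _) (hsNorm_nonneg e T)
  have hTsa : IsSelfAdjoint T := hCsa.sub hCbsa
  have hTHS : Summable fun k => ‖T (e k)‖ ^ 2 := by
    apply Summable.of_nonneg_of_le (fun k => sq_nonneg _)
      (fun k => ?_) ((hCHS.add hCbHS).mul_left 2)
    have h1 : ‖T (e k)‖ ≤ ‖C (e k)‖ + ‖Cb (e k)‖ := by
      simpa [hT] using norm_sub_le (C (e k)) (Cb (e k))
    calc ‖T (e k)‖ ^ 2 ≤ (‖C (e k)‖ + ‖Cb (e k)‖) ^ 2 := by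
          apply sq_le_sq' _ h1
          have := norm_nonneg (T (e k))
          nlinarith [norm_nonneg (C (e k)), norm_nonneg (Cb (e k))]
      _ ≤ 2 * (‖C (e k)‖ ^ 2 + ‖Cb (e k)‖ ^ 2) := by nlinarith [sq_nonneg (‖C (e k)‖ - ‖Cb (e k)‖)]
  -- the eigenvalues
  have hlam : ∀ i, lam i = ⟪q i, A (q i)⟫ := by
    intro i
    have h := orthonormal_iff_ite.mp hq
    simp only [hAeig, ContinuousLinearMap.sum_apply, ContinuousLinearMap.smul_apply, outer,
      ContinuousLinearMap.smulRight_apply, innerSL_apply_apply, inner_sum, real_inner_smul_right, h]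
    simp
  -- key bound on negative eigenvalues
  have hstep : ∀ i, lam i < 0 → -lam i ≤ B := by
    intro i hi
    set u : H := ContinuousLinearMap.adjoint Hop (q i) with hu
    have hqi : ‖q i‖ = 1 := hq.1 i
    have hunorm : ‖u‖ ≤ ‖Hop‖ := by
      calc ‖u‖ ≤ ‖ContinuousLinearMap.adjoint Hop‖ * ‖q i‖ := le_opNorm _ _
        _ = ‖Hop‖ := by rw [hqi, mul_one, LinearIsometryEquiv.norm_map _ Hop]
    have hAq : ⟪q i, A (q i)⟫ = ⟪u, C u⟫ := by
      rw [hA]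
      simp only [ContinuousLinearMap.comp_apply]
      rw [← ContinuousLinearMap.adjoint_inner_left Hop (C u) (q i)]
    have hTu : ‖T u‖ ≤ hsNorm e T * ‖u‖ := key_norm_le e T hTsa hTHS u
    have habs : -⟪u, T u⟫ ≤ B := by
      have h1 : -⟪u, T u⟫ ≤ ‖u‖ * ‖T u‖ := by
        have := abs_real_inner_le_norm u (T u)
        have := neg_le_of_abs_le this
        linarith
      calc -⟪u, T u⟫ ≤ ‖u‖ * ‖T u‖ := h1
        _ ≤ ‖u‖ * (hsNorm e T * ‖u‖) := by
            exact mul_le_mul_of_nonneg_left hTu (norm_nonneg _)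
        _ = hsNorm e T * (‖u‖ * ‖u‖) := by ring
        _ ≤ hsNorm e T * (‖Hop‖ * ‖Hop‖) := by
            apply mul_le_mul_of_nonneg_left _ (hsNorm_nonneg e T)
            exact mul_le_mul hunorm hunorm (norm_nonneg _) (norm_nonneg _)
        _ = B := by rw [hBdef]; ring
    have hCb : 0 ≤ ⟪u, Cb u⟫ := hCbpos u
    have hTinner : ⟪u, T u⟫ = ⟪u, C u⟫ - ⟪u, Cb u⟫ := by
      simp [hT, inner_sub_right]
    have : -lam i ≤ -⟪u, T u⟫ := by
      rw [hlam i, hAq]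
      rw [hTinner]
      linarith
    linarith
  have hmu : ∀ i, |if 0 ≤ lam i then 0 else -lam i| ≤ B := by
    intro i
    by_cases h : 0 ≤ lam i
    · simp [h, hB0]
    · push_neg at h
      rw [if_neg (not_le.mpr h), abs_of_nonneg (by linarith)]
      exact hstep i h
  set μ : Fin m → ℝ := fun i => if 0 ≤ lam i then 0 else -lam i with hμ
  -- the difference operator
  have hdiff : Atil - A = ∑ i : Fin m, μ i • outer (q i) := by
    rw [hAtil, hAeig,
      ← Finset.sum_filter_add_sum_filter_not Finset.univ (fun i => 0 ≤ lam i)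
        (fun i => lam i • outer (q i)),
      ← Finset.sum_filter_add_sum_filter_not Finset.univ (fun i => 0 ≤ lam i)
        (fun i => μ i • outer (q i))]
    have h1 : ∑ i ∈ Finset.univ.filter (fun i => 0 ≤ lam i), μ i • outer (q i) = 0 := by
      apply Finset.sum_eq_zero
      intro i hi
      rw [Finset.mem_filter] at hi
      simp [hμ, hi.2]
    have h2 : ∑ i ∈ Finset.univ.filter (fun i => ¬ 0 ≤ lam i), μ i • outer (q i)
        = -∑ i ∈ Finset.univ.filter (fun i => ¬ 0 ≤ lam i), lam i • outer (q i) := by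
      rw [← Finset.sum_neg_distrib]
      apply Finset.sum_congr rfl
      intro i hi
      rw [Finset.mem_filter] at hi
      simp [hμ, hi.2, neg_smul]
    rw [h1, h2]
    abel
  -- pointwise bound
  have hpoint : ∀ x : EuclideanSpace ℝ (Fin m), ‖(Atil - A) x‖ ^ 2 ≤ B ^ 2 * ‖x‖ ^ 2 := by
    intro x
    have happ : (Atil - A) x = ∑ i : Fin m, (μ i * ⟪q i, x⟫) • q i := by
      rw [hdiff]
      simp [ContinuousLinearMap.sum_apply, outer, smul_smul]
    have hnorm : ‖(Atil - A) x‖ ^ 2 = ∑ i : Fin m, (μ i * ⟪q i, x⟫) ^ 2 := by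
      rw [happ, ← real_inner_self_eq_norm_sq, hq.inner_sum]
      simp [sq]
    rw [hnorm]
    calc ∑ i : Fin m, (μ i * ⟪q i, x⟫) ^ 2
        ≤ ∑ i : Fin m, B ^ 2 * ⟪q i, x⟫ ^ 2 := by
          apply Finset.sum_le_sum
          intro i _
          rw [mul_pow]
          apply mul_le_mul_of_nonneg_right _ (sq_nonneg _)
          calc μ i ^ 2 = |μ i| ^ 2 := (sq_abs _).symm
            _ ≤ B ^ 2 := by
                apply sq_le_sq' _ (hmu i)
                have := abs_nonneg (μ i)
                linarith [hmu i]
      _ = B ^ 2 * ∑ i : Fin m, ⟪q i, x⟫ ^ 2 := by rw [Finset.mul_sum]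
      _ ≤ B ^ 2 * ‖x‖ ^ 2 := by
          apply mul_le_mul_of_nonneg_left _ (sq_nonneg B)
          have := hq.sum_inner_products_le x (s := Finset.univ)
          simpa [Real.norm_eq_abs, sq_abs] using this
  -- conclude
  have hfrob : frobNorm (Atil - A) ≤ Real.sqrt (m * B ^ 2) := by
    apply Real.sqrt_le_sqrt
    calc ∑ i : Fin m, ‖(Atil - A) (EuclideanSpace.single i (1 : ℝ))‖ ^ 2
        ≤ ∑ i : Fin m, B ^ 2 * ‖EuclideanSpace.single i (1 : ℝ)‖ ^ 2 :=
          Finset.sum_le_sum fun i _ => hpoint _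
      _ = m * B ^ 2 := by
          simp [EuclideanSpace.norm_single]
  calc frobNorm (Atil - A) ≤ Real.sqrt (m * B ^ 2) := hfrob
    _ = Real.sqrt m * B := by
        rw [Real.sqrt_mul (Nat.cast_nonneg m), Real.sqrt_sq hB0]
    _ = Real.sqrt m * ‖Hop‖ ^ 2 * hsNorm e (C - Cb) := by
        rw [hBdef, hT]; ring
end

section
/- Fix a bounded linear H: 𝓗 → ℝ^m with adjoint H*, a symmetric positive definite Γ ∈ ℝ^{m×m} with smallest eigenvalue γ_min > 0, and a positive semidefinite self-adjoint Hilbert–Schmidt operator C̄ on 𝓗, and define the mean-field Kalman gain K̄ := (C̄H*)(H C̄ H* + Γ)^{−1}. For any self-adjoint Hilbert–Schmidt operator C on 𝓗, let A := H C H* with eigendecomposition A = Σ_i λ_i q_i q_iᵀ, positive part Ã := Σ_{i: λ_i ≥ 0} λ_i q_i q_iᵀ, and define the truncated gain K := (CH*)(Ã + Γ)^{−1}. Then there exists a constant c̃ < ∞, depending only on m, ‖H‖_{op}, γ_min and the Hilbert–Schmidt norm of K̄H, such that for every such C: ‖K − K̄‖_{HS(ℝ^m,𝓗)} ≤ c̃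 · ‖C − C̄‖_{𝓗⊗𝓗}. -/
open MeasureTheory ContinuousLinearMap Finset
open scoped RealInnerProductSpace ENNReal

/-- Hilbert–Schmidt norm of an operator `ℝ^m → 𝓗`. -/
noncomputable def hsNormFin {H : Type*} [NormedAddCommGroup H] [InnerProductSpace ℝ H]
    {m : ℕ} (K : EuclideanSpace ℝ (Fin m) →L[ℝ] H) : ℝ :=
  Real.sqrt (∑ i : Fin m, ‖K (EuclideanSpace.single i (1 : ℝ))‖ ^ 2)

/-!
Write `A = H C H*`, `Ā = H C̄ H*` and `Ã` for the positive part of `A`. Subtracting the two gain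
equations gives
`(K - K̄)(Ã + Γ) = (C - C̄)H* - K̄(Ã - A) - K̄H(C - C̄)H*`.
Since `⟪q, Ā q⟫ ≥ 0`, a negative eigenvalue `λ = ⟪q, A q⟫` of `A` satisfies
`|λ| ≤ ‖A - Ā‖ ≤ ‖H‖² ‖C - C̄‖`, so `‖Ã - A‖ ≤ m ‖H‖² ‖C - C̄‖` and the right-hand side is
`O(‖C - C̄‖)`. Finally `Ã + Γ ≥ γ_min`, so multiplying by its inverse costs at most `1 / γ_min`,
while `‖K - K̄‖_HS ≤ √m ‖K - K̄‖` and `‖C - C̄‖ ≤ ‖C - C̄‖_HS`.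
-/

section HilbertSchmidt

variable {H : Type*} [NormedAddCommGroup H] [InnerProductSpace ℝ H]

theorem summable_sq_norm_sub_apply (e : HilbertBasis ℕ ℝ H) {S T : H →L[ℝ] H}
    (hS : Summable fun k => ‖S (e k)‖ ^ 2) (hT : Summable fun k => ‖T (e k)‖ ^ 2) :
    Summable fun k => ‖(S - T) (e k)‖ ^ 2 := by
  refine .of_nonneg_of_le (fun k => sq_nonneg _) (fun k => ?_) ((hS.add hT).mul_left 2)
  have h := norm_sub_le (S (e k)) (T (e k))
  rw [← sub_apply] at h
  nlinarith [sq_nonneg (‖S (e k)‖ - ‖T (e k)‖), norm_nonneg ((S - T) (e k))]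

theorem opNorm_le_hsNorm [CompleteSpace H] (e : HilbertBasis ℕ ℝ H) (T : H →L[ℝ] H)
    (hT : Summable fun k => ‖T (e k)‖ ^ 2) : ‖T‖ ≤ hsNorm e T := by
  refine T.opNorm_le_bound (Real.sqrt_nonneg _) fun x => ?_
  have hTx : HasSum (fun k => e.repr x k • T (e k)) (T x) := by
    simpa using (e.hasSum_repr x).mapL T
  refine le_of_tendsto' ((continuous_norm.tendsto _).comp hTx) fun s => ?_
  have hBessel : ∑ k ∈ s, ‖e.repr x k‖ ^ 2 ≤ ‖x‖ ^ 2 := by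
    simpa [e.repr_apply_apply] using e.orthonormal.sum_inner_products_le (s := s) x
  have hpartial : ∑ k ∈ s, ‖T (e k)‖ ^ 2 ≤ ∑' k, ‖T (e k)‖ ^ 2 :=
    hT.sum_le_tsum s fun k _ => sq_nonneg _
  calc ‖∑ k ∈ s, e.repr x k • T (e k)‖ ≤ ∑ k ∈ s, ‖e.repr x k‖ * ‖T (e k)‖ := by
        simpa only [norm_smul] using norm_sum_le s fun k => e.repr x k • T (e k)
    _ ≤ √(∑ k ∈ s, ‖e.repr x k‖ ^ 2) * √(∑ k ∈ s, ‖T (e k)‖ ^ 2) :=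
        Real.sum_mul_le_sqrt_mul_sqrt s _ _
    _ ≤ √(‖x‖ ^ 2) * √(∑' k, ‖T (e k)‖ ^ 2) := by gcongr
    _ = hsNorm e T * ‖x‖ := by rw [Real.sqrt_sq (norm_nonneg x), mul_comm, hsNorm]

theorem hsNormFin_le_sqrt_mul_opNorm {m : ℕ} (T : EuclideanSpace ℝ (Fin m) →L[ℝ] H) :
    hsNormFin T ≤ √m * ‖T‖ := by
  have hcol : ∀ i, ‖T (EuclideanSpace.single i (1 : ℝ))‖ ^ 2 ≤ ‖T‖ ^ 2 := fun i => by
    gcongr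
    simpa using T.le_opNorm (EuclideanSpace.single i (1 : ℝ))
  calc hsNormFin T ≤ √(∑ _i : Fin m, ‖T‖ ^ 2) := Real.sqrt_le_sqrt (sum_le_sum fun i _ => hcol i)
    _ = √m * ‖T‖ := by
      rw [sum_const, card_univ, Fintype.card_fin, nsmul_eq_mul,
        Real.sqrt_mul (Nat.cast_nonneg m), Real.sqrt_sq (norm_nonneg _)]

end HilbertSchmidt

section Outer

variable {E : Type*} [NormedAddCommGroup E] [InnerProductSpace ℝ E]

theorem outer_apply (x y : E) : outer x y = ⟪x, y⟫ • x := rfl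

theorem norm_outer (x : E) : ‖outer x‖ = ‖x‖ ^ 2 := by
  rw [outer, norm_smulRight_apply, innerSL_apply_norm, sq]

variable {ι : Type*} {q : ι → E}

theorem inner_sum_smul_outer_apply_self [Fintype ι] (hq : Orthonormal ℝ q)
    (lam : ι → ℝ) (j : ι) : ⟪q j, (∑ i, lam i • outer (q i)) (q j)⟫ = lam j := by
  classical
  simp [outer_apply, real_inner_smul_right, orthonormal_iff_ite.mp hq, hq.1 j]

theorem inner_sum_smul_outer_nonneg (s : Finset ι) {lam : ι → ℝ} (hlam : ∀ i ∈ s, 0 ≤ lam i)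
    (x : E) : 0 ≤ ⟪x, (∑ i ∈ s, lam i • outer (q i)) x⟫ := by
  simp only [_root_.sum_apply, smul_apply, outer_apply, inner_sum, real_inner_smul_right,
    real_inner_comm x]
  exact sum_nonneg fun i hi => mul_nonneg (hlam i hi) (mul_self_nonneg _)

theorem norm_sum_smul_outer_le (s : Finset ι) (hq : ∀ i, ‖q i‖ = 1) (lam : ι → ℝ) :
    ‖∑ i ∈ s, lam i • outer (q i)‖ ≤ ∑ i ∈ s, |lam i| :=
  (norm_sum_le _ _).trans_eq <| sum_congr rfl fun i _ => by
    rw [norm_smul, norm_outer, hq, one_pow, mul_one, Real.norm_eq_abs]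

theorem neg_inner_apply_self_le_norm_sub {A B : E →L[ℝ] E} {x : E} (hx : ‖x‖ = 1)
    (hB : 0 ≤ ⟪x, B x⟫) : -⟪x, A x⟫ ≤ ‖A - B‖ := by
  have h : |⟪x, (A - B) x⟫| ≤ ‖A - B‖ := by
    simpa [hx] using (abs_real_inner_le_norm x ((A - B) x)).trans
      (mul_le_mul_of_nonneg_left ((A - B).le_opNorm x) (norm_nonneg x))
  rw [sub_apply, inner_sub_right] at h
  linarith [neg_abs_le (⟪x, A x⟫ - ⟪x, B x⟫)]

theorem norm_sum_nonneg_smul_outer_sub_le [Fintype ι] (hq : Orthonormal ℝ q)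
    (lam : ι → ℝ) {B : E →L[ℝ] E} (hB : ∀ x, 0 ≤ ⟪x, B x⟫) :
    ‖∑ i ∈ univ.filter (fun i => 0 ≤ lam i), lam i • outer (q i) - ∑ i, lam i • outer (q i)‖
      ≤ Fintype.card ι * ‖∑ i, lam i • outer (q i) - B‖ := by
  have hsplit : ∑ i ∈ univ.filter (fun i => 0 ≤ lam i), lam i • outer (q i)
        - ∑ i, lam i • outer (q i)
      = -∑ i ∈ univ.filter (fun i => ¬ 0 ≤ lam i), lam i • outer (q i) := by
    rw [← sum_filter_add_sum_filter_not univ (fun i => 0 ≤ lam i)]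
    abel
  set A := ∑ i, lam i • outer (q i)
  have hneg : ∀ i ∈ univ.filter (fun i => ¬ 0 ≤ lam i), |lam i| ≤ ‖A - B‖ := fun i hi => by
    rw [abs_of_neg (not_le.mp (mem_filter.mp hi).2), ← inner_sum_smul_outer_apply_self hq lam i]
    exact neg_inner_apply_self_le_norm_sub (hq.1 i) (hB (q i))
  rw [hsplit, norm_neg]
  calc _ ≤ ∑ i ∈ univ.filter (fun i => ¬ 0 ≤ lam i), |lam i| := norm_sum_smul_outer_le _ hq.1 lam
    _ ≤ ∑ _i ∈ univ.filter (fun i => ¬ 0 ≤ lam i), ‖A - B‖ := sum_le_sum hneg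
    _ ≤ Fintype.card ι * ‖A - B‖ := by
      rw [sum_const, nsmul_eq_mul]
      gcongr
      exact_mod_cast card_filter_le _ _

end Outer

section Gain

theorem gain_sub_comp_eq {X Y : Type*} [NormedAddCommGroup X] [NormedSpace ℝ X]
    [NormedAddCommGroup Y] [NormedSpace ℝ Y] {Hop : X →L[ℝ] Y} {Hs : Y →L[ℝ] X}
    {C Cb : X →L[ℝ] X} {Atil Γ : Y →L[ℝ] Y} {K Kbar : Y →L[ℝ] X}
    (hK : K ∘L (Atil + Γ) = C ∘L Hs) (hKbar : Kbar ∘L (Hop ∘L Cb ∘L Hs + Γ) = Cb ∘L Hs) :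
    (K - Kbar) ∘L (Atil + Γ)
      = (C - Cb) ∘L Hs - Kbar ∘L (Atil - Hop ∘L C ∘L Hs) - (Kbar ∘L Hop) ∘L (C - Cb) ∘L Hs := by
  have hKbarΓ : Kbar ∘L Γ = Cb ∘L Hs - Kbar ∘L Hop ∘L Cb ∘L Hs := by
    rw [eq_sub_iff_add_eq, add_comm, ← comp_add, hKbar]
  rw [sub_comp, hK, comp_add Kbar, hKbarΓ]
  simp only [comp_sub, sub_comp, comp_assoc]
  abel

variable {E : Type*} [NormedAddCommGroup E] [InnerProductSpace ℝ E]

theorem mul_norm_le_norm_apply_of_coercive {S : E →L[ℝ] E} {γ : ℝ}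
    (hS : ∀ x, γ * ‖x‖ ^ 2 ≤ ⟪x, S x⟫) (x : E) : γ * ‖x‖ ≤ ‖S x‖ := by
  rcases (norm_nonneg x).eq_or_lt with hx | hx
  · simp [← hx]
  · refine le_of_mul_le_mul_right ?_ hx
    calc γ * ‖x‖ * ‖x‖ = γ * ‖x‖ ^ 2 := by ring
      _ ≤ ⟪x, S x⟫ := hS x
      _ ≤ ‖x‖ * ‖S x‖ := real_inner_le_norm x (S x)
      _ = ‖S x‖ * ‖x‖ := mul_comm _ _

theorem opNorm_le_of_comp_eq [FiniteDimensional ℝ E] {X : Type*} [NormedAddCommGroup X]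
    [NormedSpace ℝ X] {T D : E →L[ℝ] X} {S : E →L[ℝ] E} {γ : ℝ} (hγ : 0 < γ)
    (hS : ∀ x, γ * ‖x‖ ≤ ‖S x‖) (hTS : T ∘L S = D) : ‖T‖ ≤ ‖D‖ / γ := by
  have hinj : Function.Injective (S : E →ₗ[ℝ] E) := by
    refine (injective_iff_map_eq_zero _).mpr fun x hx => norm_le_zero_iff.mp ?_
    have := hS x
    rw [show S x = 0 from hx, norm_zero] at this
    nlinarith [norm_nonneg x]
  refine T.opNorm_le_bound (by positivity) fun y => ?_
  obtain ⟨x, rfl⟩ := LinearMap.injective_iff_surjective.mp hinj y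
  calc ‖T (S x)‖ = ‖D x‖ := by rw [← hTS]; rfl
    _ ≤ ‖D‖ * ‖x‖ := D.le_opNorm x
    _ ≤ ‖D‖ * (‖S x‖ / γ) := by gcongr; rw [le_div_iff₀ hγ]; linarith [hS x]
    _ = ‖D‖ / γ * ‖S x‖ := by ring

variable [CompleteSpace E] {F : Type*} [NormedAddCommGroup F] [InnerProductSpace ℝ F]
  [CompleteSpace F]

theorem norm_comp_comp_adjoint_sub_le (Hop : E →L[ℝ] F) (C Cb : E →L[ℝ] E) :
    ‖Hop ∘L C ∘L adjoint Hop - Hop ∘L Cb ∘L adjoint Hop‖ ≤ ‖Hop‖ ^ 2 * ‖C - Cb‖ := by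
  rw [← comp_sub, ← sub_comp]
  calc _ ≤ ‖Hop‖ * (‖C - Cb‖ * ‖adjoint Hop‖) :=
        (opNorm_comp_le _ _).trans (by gcongr; exact opNorm_comp_le _ _)
    _ = ‖Hop‖ ^ 2 * ‖C - Cb‖ := by rw [LinearIsometryEquiv.norm_map]; ring

theorem inner_comp_comp_adjoint_apply_nonneg (Hop : E →L[ℝ] F) {Cb : E →L[ℝ] E}
    (hCb : ∀ x, 0 ≤ ⟪x, Cb x⟫) (y : F) : 0 ≤ ⟪y, (Hop ∘L Cb ∘L adjoint Hop) y⟫ := by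
  rw [comp_apply, comp_apply, ← adjoint_inner_left]
  exact hCb _

theorem norm_truncatedGain_sub_le [FiniteDimensional ℝ F] {ι : Type*} [Fintype ι]
    (Hop : E →L[ℝ] F) {Γ : F →L[ℝ] F} {γ : ℝ} (hγ : 0 < γ)
    (hΓ : ∀ x, γ * ‖x‖ ^ 2 ≤ ⟪x, Γ x⟫) {Cb : E →L[ℝ] E} (hCb : ∀ x, 0 ≤ ⟪x, Cb x⟫)
    {Kbar : F →L[ℝ] E} (hKbar : Kbar ∘L (Hop ∘L Cb ∘L adjoint Hop + Γ) = Cb ∘L adjoint Hop)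
    {C : E →L[ℝ] E} {lam : ι → ℝ} {q : ι → F} (hq : Orthonormal ℝ q)
    (hA : Hop ∘L C ∘L adjoint Hop = ∑ i, lam i • outer (q i)) {K : F →L[ℝ] E}
    (hK : K ∘L (∑ i ∈ univ.filter (fun i => 0 ≤ lam i), lam i • outer (q i) + Γ)
      = C ∘L adjoint Hop) :
    ‖K - Kbar‖ ≤ (‖Hop‖ + Fintype.card ι * ‖Kbar‖ * ‖Hop‖ ^ 2 + ‖Kbar ∘L Hop‖ * ‖Hop‖) / γ
      * ‖C - Cb‖ := by
  set Atil := ∑ i ∈ univ.filter (fun i => 0 ≤ lam i), lam i • outer (q i)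
  set A := Hop ∘L C ∘L adjoint Hop
  have hHs : ‖(C - Cb) ∘L adjoint Hop‖ ≤ ‖C - Cb‖ * ‖Hop‖ :=
    (opNorm_comp_le _ _).trans_eq (by rw [LinearIsometryEquiv.norm_map])
  have hAtil : ‖Atil - A‖ ≤ Fintype.card ι * (‖Hop‖ ^ 2 * ‖C - Cb‖) := by
    rw [hA]
    refine (norm_sum_nonneg_smul_outer_sub_le hq lam
      (inner_comp_comp_adjoint_apply_nonneg Hop hCb)).trans ?_
    rw [← hA]
    gcongr
    exact norm_comp_comp_adjoint_sub_le Hop C Cb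
  have hAtil_nonneg : ∀ x, 0 ≤ ⟪x, Atil x⟫ :=
    inner_sum_smul_outer_nonneg _ fun i hi => (mem_filter.mp hi).2
  have hcoer : ∀ x, γ * ‖x‖ ≤ ‖(Atil + Γ) x‖ := mul_norm_le_norm_apply_of_coercive fun x => by
    rw [add_apply, inner_add_right]
    linarith [hAtil_nonneg x, hΓ x]
  refine (opNorm_le_of_comp_eq hγ hcoer (gain_sub_comp_eq hK hKbar)).trans ?_
  rw [div_mul_eq_mul_div]
  gcongr
  calc _ ≤ ‖(C - Cb) ∘L adjoint Hop‖ + ‖Kbar ∘L (Atil - A)‖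
        + ‖(Kbar ∘L Hop) ∘L (C - Cb) ∘L adjoint Hop‖ :=
        (norm_sub_le _ _).trans (add_le_add_left (norm_sub_le _ _) _)
    _ ≤ ‖C - Cb‖ * ‖Hop‖ + ‖Kbar‖ * (Fintype.card ι * (‖Hop‖ ^ 2 * ‖C - Cb‖))
        + ‖Kbar ∘L Hop‖ * (‖C - Cb‖ * ‖Hop‖) := by
      gcongr
      · exact (opNorm_comp_le _ _).trans (by gcongr)
      · exact (opNorm_comp_le _ _).trans (by gcongr)
    _ = _ := by ring

end Gain

theorem stmt6_general
    {H : Type*} [NormedAddCommGroup H] [InnerProductSpace ℝ H] [CompleteSpace H]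
    (e : HilbertBasis ℕ ℝ H)
    {m : ℕ} (Hop : H →L[ℝ] EuclideanSpace ℝ (Fin m))
    (Γ : EuclideanSpace ℝ (Fin m) →L[ℝ] EuclideanSpace ℝ (Fin m))
    (γmin : ℝ) (hγ : 0 < γmin)
    (hΓpos : ∀ x : EuclideanSpace ℝ (Fin m), γmin * ‖x‖ ^ 2 ≤ ⟪x, Γ x⟫)
    (Cb : H →L[ℝ] H) (hCbpos : ∀ x : H, 0 ≤ ⟪x, Cb x⟫)
    (hCbHS : Summable fun k => ‖Cb (e k)‖ ^ 2)
    (Kbar : EuclideanSpace ℝ (Fin m) →L[ℝ] H)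
    (hKbar : Kbar ∘L (Hop ∘L Cb ∘L (ContinuousLinearMap.adjoint Hop) + Γ)
      = Cb ∘L (ContinuousLinearMap.adjoint Hop)) :
    ∃ c : ℝ, 0 < c ∧
      ∀ (C : H →L[ℝ] H), IsSelfAdjoint C → (Summable fun k => ‖C (e k)‖ ^ 2) →
      ∀ (lam : Fin m → ℝ) (q : Fin m → EuclideanSpace ℝ (Fin m)), Orthonormal ℝ q →
        Hop ∘L C ∘L (ContinuousLinearMap.adjoint Hop) = (∑ i : Fin m, lam i • outer (q i)) →
      ∀ (Atil : EuclideanSpace ℝ (Fin m) →L[ℝ] EuclideanSpace ℝ (Fin m)),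
        Atil = (∑ i ∈ Finset.univ.filter (fun i => 0 ≤ lam i), lam i • outer (q i)) →
      ∀ (K : EuclideanSpace ℝ (Fin m) →L[ℝ] H),
        K ∘L (Atil + Γ) = C ∘L (ContinuousLinearMap.adjoint Hop) →
        hsNormFin (K - Kbar) ≤ c * hsNorm e (C - Cb) := by
  set c₀ := √m * ((‖Hop‖ + m * ‖Kbar‖ * ‖Hop‖ ^ 2 + ‖Kbar ∘L Hop‖ * ‖Hop‖) / γmin)
  refine ⟨c₀ + 1, by positivity, fun C _ hC lam q hq hA Atil hAtil K hK => ?_⟩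
  have hgain := norm_truncatedGain_sub_le Hop hγ hΓpos hCbpos hKbar hq hA (hAtil ▸ hK)
  rw [Fintype.card_fin] at hgain
  have hHS := opNorm_le_hsNorm e (C - Cb) (summable_sq_norm_sub_apply e hC hCbHS)
  calc hsNormFin (K - Kbar) ≤ √m * ‖K - Kbar‖ := hsNormFin_le_sqrt_mul_opNorm _
    _ ≤ c₀ * hsNorm e (C - Cb) := by
      rw [mul_assoc]
      gcongr
      exact hgain.trans (by gcongr)
    _ ≤ (c₀ + 1) * hsNorm e (C - Cb) := by
      gcongr
      · exact Real.sqrt_nonneg _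
      · linarith

/-- Kalman gain error: with `K̄ = (C̄H*)(H C̄ H* + Γ)⁻¹` the mean-field gain
and, for any self-adjoint Hilbert–Schmidt `C`, the truncated gain `K = (CH*)(Ã + Γ)⁻¹`
(where `Ã` is the positive part of `A = H C H*`), there is a constant `c̃`, depending only
on `m`, `‖H‖`, `γ_min` and `‖K̄H‖_{HS}`, such that
`‖K − K̄‖_{HS(ℝ^m,𝓗)} ≤ c̃ ‖C − C̄‖_{𝓗⊗𝓗}`. -/
theorem stmt6
    {H : Type*} [NormedAddCommGroup H] [InnerProductSpace ℝ H] [CompleteSpace H]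
    (e : HilbertBasis ℕ ℝ H)
    {m : ℕ} (Hop : H →L[ℝ] EuclideanSpace ℝ (Fin m))
    (Γ : EuclideanSpace ℝ (Fin m) →L[ℝ] EuclideanSpace ℝ (Fin m))
    (hΓsa : IsSelfAdjoint Γ) (γmin : ℝ) (hγ : 0 < γmin)
    (hΓpos : ∀ x : EuclideanSpace ℝ (Fin m), γmin * ‖x‖ ^ 2 ≤ ⟪x, Γ x⟫)
    (Cb : H →L[ℝ] H) (hCbsa : IsSelfAdjoint Cb) (hCbpos : ∀ x : H, 0 ≤ ⟪x, Cb x⟫)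
    (hCbHS : Summable fun k => ‖Cb (e k)‖ ^ 2)
    (Kbar : EuclideanSpace ℝ (Fin m) →L[ℝ] H)
    (hKbar : Kbar ∘L (Hop ∘L Cb ∘L (ContinuousLinearMap.adjoint Hop) + Γ)
      = Cb ∘L (ContinuousLinearMap.adjoint Hop)) :
    ∃ c : ℝ, 0 < c ∧
      ∀ (C : H →L[ℝ] H), IsSelfAdjoint C → (Summable fun k => ‖C (e k)‖ ^ 2) →
      ∀ (lam : Fin m → ℝ) (q : Fin m → EuclideanSpace ℝ (Fin m)), Orthonormal ℝ q →
        Hop ∘L C ∘L (ContinuousLinearMap.adjoint Hop) = (∑ i : Fin m, lam i • outer (q i)) →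
      ∀ (Atil : EuclideanSpace ℝ (Fin m) →L[ℝ] EuclideanSpace ℝ (Fin m)),
        Atil = (∑ i ∈ Finset.univ.filter (fun i => 0 ≤ lam i), lam i • outer (q i)) →
      ∀ (K : EuclideanSpace ℝ (Fin m) →L[ℝ] H),
        K ∘L (Atil + Γ) = C ∘L (ContinuousLinearMap.adjoint Hop) →
        hsNormFin (K - Kbar) ≤ c * hsNorm e (C - Cb) :=
  stmt6_general e Hop Γ γmin hγ hΓpos Cb hCbpos hCbHS Kbar hKbar
end

section
/- Let p ≥ 2 and M ≥ 2, and let (X_i, Y_i), i = 1,…,M, be pairs of 𝓗-valued random variables on a common probability space such that each pair (X_i, Y_i) is identically distributed with a fixed pair (X, Y) where X, Y ∈ L^{2p}(Ω;𝓗) (no independence across i is assumed). Then ‖cov_M[X_·] − cov_M[Y_·]‖_{L^p(Ω;𝓗⊗𝓗)} ≤ (2M/(M−1)) · ‖X − Y‖_{L^{2p}(Ω;𝓗)} · (‖X‖_{L^{2p}(Ω;𝓗)} + ‖Y‖_{L^{2p}(Ω;𝓗)}). -/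
open MeasureTheory ProbabilityTheory ContinuousLinearMap Finset
open scoped RealInnerProductSpace ENNReal

/-- The `L^p(Ω; 𝓗⊗𝓗)`-norm of an operator-valued random variable. -/
noncomputable def lpNormHS {Ω : Type*} [MeasurableSpace Ω] (μ : Measure Ω)
    {H : Type*} [NormedAddCommGroup H] [InnerProductSpace ℝ H]
    (e : HilbertBasis ℕ ℝ H) (p : ℝ) (T : Ω → H →L[ℝ] H) : ℝ :=
  (∫ ω, hsNorm e (T ω) ^ p ∂μ) ^ (1 / p)

/-- The sample covariance `cov_M[u] = (M/(M−1)) (E_M[u⊗u] − E_M[u] ⊗ E_M[u])`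
of the samples `u_1(ω), …, u_M(ω)`. -/
noncomputable def sampleCov {Ω : Type*} {H : Type*} [NormedAddCommGroup H]
    [InnerProductSpace ℝ H] (M : ℕ) (u : Fin M → Ω → H) (ω : Ω) : H →L[ℝ] H :=
  ((M : ℝ) / ((M : ℝ) - 1)) •
    ((M : ℝ)⁻¹ • (∑ i, outer (u i ω)) - outer ((M : ℝ)⁻¹ • ∑ i, u i ω))

/-!
Pointwise, `x ⊗ x − y ⊗ y = x ⊗ (x − y) + (x − y) ⊗ y` has Hilbert–Schmidt norm at most
`‖x − y‖ (‖x‖ + ‖y‖)`. Applied to every sample and to the two sample means, this bounds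
`‖cov_M[X] − cov_M[Y]‖_HS` by `M/(M−1)` times `E_M[a b] + E_M[a] E_M[b]`, where
`a_i = ‖X_i − Y_i‖` and `b_i = ‖X_i‖ + ‖Y_i‖`. By Minkowski's and Hölder's inequalities, each of the
two terms has `L^p` norm at most `‖a‖_{L^{2p}} ‖b‖_{L^{2p}}`. Only the law of each single pair
`(X_i, Y_i)` enters, so no independence between the samples is needed.
-/

open InnerProductSpace

namespace HilbertBasis

variable {H : Type*} [NormedAddCommGroup H] [InnerProductSpace ℝ H] (e : HilbertBasis ℕ ℝ H)

def hilbertSchmidt : Submodule ℝ (H →L[ℝ] H) where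
  carrier := {T | Memℓp (fun k => T (e k)) 2}
  add_mem' hS hT := hS.add hT
  zero_mem' := zero_memℓp
  smul_mem' c _ hT := hT.const_smul c

variable {e}

theorem hsNorm_eq_norm_lp {T : H →L[ℝ] H} (hT : T ∈ e.hilbertSchmidt) :
    hsNorm e T = ‖(⟨fun k => T (e k), hT⟩ : lp (fun _ : ℕ => H) 2)‖ := by
  rw [lp.norm_eq_tsum_rpow (by norm_num), hsNorm, Real.sqrt_eq_rpow]
  norm_num

theorem hsNorm_add_le {S T : H →L[ℝ] H} (hS : S ∈ e.hilbertSchmidt)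
    (hT : T ∈ e.hilbertSchmidt) : hsNorm e (S + T) ≤ hsNorm e S + hsNorm e T := by
  rw [hsNorm_eq_norm_lp hS, hsNorm_eq_norm_lp hT, hsNorm_eq_norm_lp (add_mem hS hT)]
  exact norm_add_le (⟨_, hS⟩ : lp (fun _ : ℕ => H) 2) ⟨_, hT⟩

theorem hsNorm_sub_le {S T : H →L[ℝ] H} (hS : S ∈ e.hilbertSchmidt)
    (hT : T ∈ e.hilbertSchmidt) : hsNorm e (S - T) ≤ hsNorm e S + hsNorm e T := by
  rw [hsNorm_eq_norm_lp hS, hsNorm_eq_norm_lp hT, hsNorm_eq_norm_lp (sub_mem hS hT)]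
  exact norm_sub_le (⟨_, hS⟩ : lp (fun _ : ℕ => H) 2) ⟨_, hT⟩

theorem hsNorm_sum_le {ι : Type*} (s : Finset ι) {T : ι → H →L[ℝ] H}
    (hT : ∀ i ∈ s, T i ∈ e.hilbertSchmidt) :
    hsNorm e (∑ i ∈ s, T i) ≤ ∑ i ∈ s, hsNorm e (T i) := by
  classical
  induction s using Finset.induction_on with
  | empty => simp [hsNorm]
  | insert a s ha ih =>
    rw [Finset.forall_mem_insert] at hT
    rw [sum_insert ha, sum_insert ha]
    exact (hsNorm_add_le hT.1 (sum_mem hT.2)).trans (add_le_add le_rfl (ih hT.2))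

variable (e) in
theorem hsNorm_smul (c : ℝ) (T : H →L[ℝ] H) : hsNorm e (c • T) = |c| * hsNorm e T := by
  simp only [hsNorm, smul_apply, norm_smul, mul_pow, Real.norm_eq_abs, sq_abs, tsum_mul_left,
    Real.sqrt_mul (sq_nonneg c), Real.sqrt_sq_eq_abs]

variable (e) in
theorem hasSum_norm_rankOne_apply_sq (x y : H) :
    HasSum (fun k => ‖rankOne ℝ x y (e k)‖ ^ 2) (‖x‖ ^ 2 * ‖y‖ ^ 2) := by
  have h := (e.hasSum_inner_mul_inner y y).mul_left (‖x‖ ^ 2)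
  rw [real_inner_self_eq_norm_sq] at h
  refine h.congr_fun fun k => ?_
  rw [rankOne_apply, norm_smul, mul_pow, Real.norm_eq_abs, sq_abs, real_inner_comm (e k) y]
  ring

theorem rankOne_mem_hilbertSchmidt (x y : H) : rankOne ℝ x y ∈ e.hilbertSchmidt := by
  refine memℓp_gen ?_
  simpa using (hasSum_norm_rankOne_apply_sq e x y).summable

variable (e) in
theorem hsNorm_rankOne (x y : H) : hsNorm e (rankOne ℝ x y) = ‖x‖ * ‖y‖ := by
  rw [hsNorm, (hasSum_norm_rankOne_apply_sq e x y).tsum_eq, ← mul_pow,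
    Real.sqrt_sq (by positivity)]

end HilbertBasis

section Lp

variable {Ω : Type*} [MeasurableSpace Ω] {μ : Measure Ω}

theorem ENNReal.holderTriple_ofReal_two_mul {p : ℝ} (hp : 0 < p) :
    ENNReal.HolderTriple (ENNReal.ofReal (2 * p)) (ENNReal.ofReal (2 * p)) (ENNReal.ofReal p) where
  inv_add_inv_eq_inv := by
    rw [← ENNReal.ofReal_inv_of_pos (by positivity), ← ENNReal.ofReal_inv_of_pos hp,
      ← ENNReal.ofReal_add (by positivity) (by positivity)]
    congr 1
    field_simp
    ring

theorem lpNorm_eq_toReal_eLpNorm {E : Type*} [NormedAddCommGroup E] {q : ℝ} (hq : 0 < q)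
    {u : Ω → E} (hu : MemLp u (ENNReal.ofReal q) μ) :
    lpNorm μ q u = (eLpNorm u (ENNReal.ofReal q) μ).toReal := by
  rw [hu.eLpNorm_eq_integral_rpow_norm (by simpa using hq) ENNReal.ofReal_ne_top,
    ENNReal.toReal_ofReal hq.le, ENNReal.toReal_ofReal (by positivity), _root_.lpNorm, one_div]

theorem lpNormHS_le_toReal_eLpNorm {H : Type*} [NormedAddCommGroup H] [InnerProductSpace ℝ H]
    (e : HilbertBasis ℕ ℝ H) {p : ℝ} (hp : 0 < p) {T : Ω → H →L[ℝ] H} {g : Ω → ℝ}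
    (hg : MemLp g (ENNReal.ofReal p) μ) (hT : ∀ ω, hsNorm e (T ω) ≤ g ω) :
    lpNormHS μ e p T ≤ (eLpNorm g (ENNReal.ofReal p) μ).toReal := by
  have hint : Integrable (fun ω => ‖g ω‖ ^ p) μ := by
    simpa [ENNReal.toReal_ofReal hp.le] using
      hg.integrable_norm_rpow (by simpa using hp) ENNReal.ofReal_ne_top
  rw [← lpNorm_eq_toReal_eLpNorm hp hg, lpNormHS, _root_.lpNorm]
  have hpow_nonneg ω : 0 ≤ hsNorm e (T ω) ^ p := Real.rpow_nonneg (Real.sqrt_nonneg _) p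
  refine Real.rpow_le_rpow (integral_nonneg hpow_nonneg) ?_ (by positivity)
  refine integral_mono_of_nonneg (.of_forall hpow_nonneg) hint (.of_forall fun ω => ?_)
  exact Real.rpow_le_rpow (Real.sqrt_nonneg _) ((hT ω).trans (Real.le_norm_self _)) hp.le

theorem eLpNorm_inv_natCast_smul_sum_le {E : Type*} [NormedAddCommGroup E] [NormedSpace ℝ E]
    {p : ℝ≥0∞} (hp : 1 ≤ p) {M : ℕ} {f : Fin M → Ω → E}
    (hf : ∀ i, AEStronglyMeasurable (f i) μ) {C : ℝ≥0∞} (hC : ∀ i, eLpNorm (f i) p μ ≤ C) :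
    eLpNorm (fun ω => (M : ℝ)⁻¹ • ∑ i, f i ω) p μ ≤ C := by
  rcases M.eq_zero_or_pos with rfl | hM
  · simp
  have hsum : eLpNorm (∑ i, f i) p μ ≤ M * C := by
    refine (eLpNorm_sum_le (fun i _ => hf i) hp).trans ?_
    simpa using sum_le_sum fun i (_ : i ∈ univ) => hC i
  calc eLpNorm (fun ω => (M : ℝ)⁻¹ • ∑ i, f i ω) p μ
      = (M : ℝ≥0∞)⁻¹ * eLpNorm (∑ i, f i) p μ := by
        have hfun : (fun ω => (M : ℝ)⁻¹ • ∑ i, f i ω) = (M : ℝ)⁻¹ • ∑ i, f i := by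
          ext ω
          simp [Finset.sum_apply]
        rw [hfun, eLpNorm_const_smul, enorm_inv (by positivity), Real.enorm_natCast]
    _ ≤ (M : ℝ≥0∞)⁻¹ * (M * C) := by gcongr
    _ = C := ENNReal.inv_mul_cancel_left (by simpa using hM.ne') (by simp)

end Lp

section IdentDistrib

variable {Ω : Type*} [MeasurableSpace Ω] {μ : Measure Ω} {p q r : ℝ≥0∞} [p.HolderTriple q r]
  {a₀ b₀ : Ω → ℝ} {M : ℕ} {a b : Fin M → Ω → ℝ}

theorem memLp_mean_mul_add_mean_mul_mean (ha₀ : MemLp a₀ p μ) (hb₀ : MemLp b₀ q μ)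
    (ha : ∀ i, IdentDistrib (a i) a₀ μ μ) (hb : ∀ i, IdentDistrib (b i) b₀ μ μ) :
    MemLp (fun ω => (M : ℝ)⁻¹ * ∑ i, a i ω * b i ω +
      ((M : ℝ)⁻¹ * ∑ i, a i ω) * ((M : ℝ)⁻¹ * ∑ i, b i ω)) r μ := by
  have hai i := (ha i).symm.memLp_snd ha₀
  have hbi i := (hb i).symm.memLp_snd hb₀
  refine MemLp.add ?_ (MemLp.mul' (p := p) (q := q) ?_ ?_)
  · exact (memLp_finsetSum univ fun i _ => (hbi i).mul' (hai i)).const_mul _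
  · exact (memLp_finsetSum univ fun i _ => hbi i).const_mul _
  · exact (memLp_finsetSum univ fun i _ => hai i).const_mul _

theorem eLpNorm_mean_mul_add_mean_mul_mean_le (hr : 1 ≤ r) (ha₀ : MemLp a₀ p μ)
    (hb₀ : MemLp b₀ q μ) (ha : ∀ i, IdentDistrib (a i) a₀ μ μ)
    (hb : ∀ i, IdentDistrib (b i) b₀ μ μ) :
    eLpNorm (fun ω => (M : ℝ)⁻¹ * ∑ i, a i ω * b i ω +
      ((M : ℝ)⁻¹ * ∑ i, a i ω) * ((M : ℝ)⁻¹ * ∑ i, b i ω)) r μ ≤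
      2 * (eLpNorm a₀ p μ * eLpNorm b₀ q μ) := by
  have hp : 1 ≤ p := hr.trans (ENNReal.HolderTriple.le p q r)
  have hq : 1 ≤ q := hr.trans (ENNReal.HolderTriple.le q p r)
  have hai i := ((ha i).symm.memLp_snd ha₀).aestronglyMeasurable
  have hbi i := ((hb i).symm.memLp_snd hb₀).aestronglyMeasurable
  have hmeanA : eLpNorm (fun ω => (M : ℝ)⁻¹ * ∑ i, a i ω) p μ ≤ eLpNorm a₀ p μ :=
    eLpNorm_inv_natCast_smul_sum_le hp hai fun i => ((ha i).eLpNorm_eq p).le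
  have hmeanB : eLpNorm (fun ω => (M : ℝ)⁻¹ * ∑ i, b i ω) q μ ≤ eLpNorm b₀ q μ :=
    eLpNorm_inv_natCast_smul_sum_le hq hbi fun i => ((hb i).eLpNorm_eq q).le
  have hmeanAB : eLpNorm (fun ω => (M : ℝ)⁻¹ * ∑ i, a i ω * b i ω) r μ ≤
      eLpNorm a₀ p μ * eLpNorm b₀ q μ := by
    refine eLpNorm_inv_natCast_smul_sum_le hr (fun i => (hai i).mul (hbi i)) fun i => ?_
    rw [← (ha i).eLpNorm_eq p, ← (hb i).eLpNorm_eq q]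
    exact (eLpNorm_smul_le_mul_eLpNorm (p := p) (q := q) (r := r) (hbi i) (hai i) :)
  have hmeasA : AEStronglyMeasurable (fun ω => (M : ℝ)⁻¹ * ∑ i, a i ω) μ :=
    (Finset.aestronglyMeasurable_fun_sum univ fun i _ => hai i).const_mul _
  have hmeasB : AEStronglyMeasurable (fun ω => (M : ℝ)⁻¹ * ∑ i, b i ω) μ :=
    (Finset.aestronglyMeasurable_fun_sum univ fun i _ => hbi i).const_mul _
  have hmeasAB : AEStronglyMeasurable (fun ω => (M : ℝ)⁻¹ * ∑ i, a i ω * b i ω) μ :=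
    (Finset.aestronglyMeasurable_fun_sum univ fun i _ => (hai i).mul (hbi i)).const_mul _
  have hprod : eLpNorm (fun ω => ((M : ℝ)⁻¹ * ∑ i, a i ω) * ((M : ℝ)⁻¹ * ∑ i, b i ω)) r μ ≤
      eLpNorm a₀ p μ * eLpNorm b₀ q μ :=
    (eLpNorm_smul_le_mul_eLpNorm (p := p) (q := q) (r := r) hmeasB hmeasA).trans
      (mul_le_mul' hmeanA hmeanB)
  rw [two_mul]
  exact (eLpNorm_add_le hmeasAB (hmeasA.mul hmeasB) hr).trans (add_le_add hmeanAB hprod)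

end IdentDistrib

section SampleCovariance

variable {H : Type*} [NormedAddCommGroup H] [InnerProductSpace ℝ H]

theorem outer_eq_rankOne (x : H) : outer x = rankOne ℝ x x := rfl

theorem outer_sub_outer (x y : H) :
    outer x - outer y = rankOne ℝ x (x - y) + rankOne ℝ (x - y) y := by
  ext z
  simp only [outer_eq_rankOne, sub_apply, add_apply, rankOne_apply, inner_sub_left, sub_smul,
    smul_sub]
  abel

theorem outer_sub_outer_mem_hilbertSchmidt (e : HilbertBasis ℕ ℝ H) (x y : H) :
    outer x - outer y ∈ e.hilbertSchmidt := by
  rw [outer_sub_outer]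
  exact add_mem (e.rankOne_mem_hilbertSchmidt _ _) (e.rankOne_mem_hilbertSchmidt _ _)

theorem hsNorm_outer_sub_outer_le (e : HilbertBasis ℕ ℝ H) (x y : H) :
    hsNorm e (outer x - outer y) ≤ ‖x - y‖ * (‖x‖ + ‖y‖) := by
  rw [outer_sub_outer]
  refine (e.hsNorm_add_le (e.rankOne_mem_hilbertSchmidt _ _)
    (e.rankOne_mem_hilbertSchmidt _ _)).trans_eq ?_
  rw [e.hsNorm_rankOne, e.hsNorm_rankOne]
  ring

theorem norm_inv_natCast_smul_sum_le {M : ℕ} (x : Fin M → H) :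
    ‖(M : ℝ)⁻¹ • ∑ i, x i‖ ≤ (M : ℝ)⁻¹ * ∑ i, ‖x i‖ := by
  rw [norm_smul, Real.norm_of_nonneg (by positivity)]
  gcongr
  exact norm_sum_le _ _

-- Also for `M = 0, 1`, where the quotient is `0 / (-1)` and `1 / 0 = 0`.
theorem natCast_div_natCast_sub_one_nonneg (M : ℕ) : 0 ≤ (M : ℝ) / ((M : ℝ) - 1) := by
  rcases M with _ | M
  · simp
  · push_cast
    rw [add_sub_cancel_right]
    positivity

noncomputable def sampleCovMajorant {Ω : Type*} (M : ℕ) (u v : Fin M → Ω → H) (ω : Ω) : ℝ :=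
  (M : ℝ)⁻¹ * ∑ i, ‖u i ω - v i ω‖ * (‖u i ω‖ + ‖v i ω‖) +
    ((M : ℝ)⁻¹ * ∑ i, ‖u i ω - v i ω‖) * ((M : ℝ)⁻¹ * ∑ i, (‖u i ω‖ + ‖v i ω‖))

theorem hsNorm_sampleCov_sub_le {Ω : Type*} (e : HilbertBasis ℕ ℝ H) (M : ℕ)
    (u v : Fin M → Ω → H) (ω : Ω) :
    hsNorm e (sampleCov M u ω - sampleCov M v ω) ≤
      (M : ℝ) / ((M : ℝ) - 1) * sampleCovMajorant M u v ω := by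
  have hdiff : sampleCov M u ω - sampleCov M v ω = ((M : ℝ) / ((M : ℝ) - 1)) •
      ((M : ℝ)⁻¹ • ∑ i, (outer (u i ω) - outer (v i ω)) -
        (outer ((M : ℝ)⁻¹ • ∑ i, u i ω) - outer ((M : ℝ)⁻¹ • ∑ i, v i ω))) := by
    simp only [sampleCov, sum_sub_distrib, smul_sub]
    abel
  set uMean := (M : ℝ)⁻¹ • ∑ i, u i ω
  set vMean := (M : ℝ)⁻¹ • ∑ i, v i ω
  have hmem : ∀ i ∈ univ, outer (u i ω) - outer (v i ω) ∈ e.hilbertSchmidt :=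
    fun i _ => outer_sub_outer_mem_hilbertSchmidt e _ _
  rw [hdiff, e.hsNorm_smul, abs_of_nonneg (natCast_div_natCast_sub_one_nonneg M),
    sampleCovMajorant]
  refine mul_le_mul_of_nonneg_left ?_ (natCast_div_natCast_sub_one_nonneg M)
  calc _ ≤ hsNorm e ((M : ℝ)⁻¹ • ∑ i, (outer (u i ω) - outer (v i ω))) +
        hsNorm e (outer uMean - outer vMean) :=
        e.hsNorm_sub_le (Submodule.smul_mem _ _ (sum_mem hmem))
          (outer_sub_outer_mem_hilbertSchmidt e _ _)
    _ ≤ (M : ℝ)⁻¹ * ∑ i, ‖u i ω - v i ω‖ * (‖u i ω‖ + ‖v i ω‖) +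
        ‖uMean - vMean‖ * (‖uMean‖ + ‖vMean‖) := by
      rw [e.hsNorm_smul, abs_of_nonneg (by positivity)]
      gcongr
      · exact (e.hsNorm_sum_le _ hmem).trans
          (sum_le_sum fun i _ => hsNorm_outer_sub_outer_le e _ _)
      · exact hsNorm_outer_sub_outer_le e _ _
    _ ≤ _ := by
      have hs : ‖uMean‖ + ‖vMean‖ ≤ (M : ℝ)⁻¹ * ∑ i, (‖u i ω‖ + ‖v i ω‖) := by
        rw [sum_add_distrib, mul_add]
        exact add_le_add (norm_inv_natCast_smul_sum_le _) (norm_inv_natCast_smul_sum_le _)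
      have hd : ‖uMean - vMean‖ ≤ (M : ℝ)⁻¹ * ∑ i, ‖u i ω - v i ω‖ := by
        simpa only [uMean, vMean, sum_sub_distrib, smul_sub]
          using norm_inv_natCast_smul_sum_le fun i => u i ω - v i ω
      gcongr

end SampleCovariance

section SampleCovMajorant

variable {Ω : Type*} [MeasurableSpace Ω] {μ : Measure Ω} {q r : ℝ≥0∞} [q.HolderTriple q r]
  {H : Type*} [NormedAddCommGroup H] [MeasurableSpace H] [BorelSpace H]
  [SecondCountableTopology H] {X₀ Y₀ : Ω → H} {M : ℕ} {X Y : Fin M → Ω → H}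

theorem memLp_sampleCovMajorant (hX₀ : MemLp X₀ q μ) (hY₀ : MemLp Y₀ q μ)
    (hid : ∀ i, IdentDistrib (fun ω => (X i ω, Y i ω)) (fun ω => (X₀ ω, Y₀ ω)) μ μ) :
    MemLp (sampleCovMajorant M X Y) r μ :=
  memLp_mean_mul_add_mean_mul_mean (a₀ := fun ω => ‖X₀ ω - Y₀ ω‖)
    (b₀ := fun ω => ‖X₀ ω‖ + ‖Y₀ ω‖) (hX₀.sub hY₀).norm (hX₀.norm.add hY₀.norm)
    (fun i => (hid i).comp (measurable_fst.sub measurable_snd).norm)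
    (fun i => (hid i).comp (measurable_fst.norm.add measurable_snd.norm))

theorem eLpNorm_sampleCovMajorant_le (hr : 1 ≤ r) (hX₀ : MemLp X₀ q μ) (hY₀ : MemLp Y₀ q μ)
    (hid : ∀ i, IdentDistrib (fun ω => (X i ω, Y i ω)) (fun ω => (X₀ ω, Y₀ ω)) μ μ) :
    eLpNorm (sampleCovMajorant M X Y) r μ ≤
      2 * (eLpNorm (fun ω => X₀ ω - Y₀ ω) q μ * (eLpNorm X₀ q μ + eLpNorm Y₀ q μ)) := by
  refine (eLpNorm_mean_mul_add_mean_mul_mean_le (a₀ := fun ω => ‖X₀ ω - Y₀ ω‖)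
    (b₀ := fun ω => ‖X₀ ω‖ + ‖Y₀ ω‖) hr (hX₀.sub hY₀).norm (hX₀.norm.add hY₀.norm)
    (fun i => (hid i).comp (measurable_fst.sub measurable_snd).norm)
    (fun i => (hid i).comp (measurable_fst.norm.add measurable_snd.norm))).trans ?_
  rw [eLpNorm_norm]
  gcongr
  calc eLpNorm (fun ω => ‖X₀ ω‖ + ‖Y₀ ω‖) q μ
      ≤ eLpNorm (fun ω => ‖X₀ ω‖) q μ + eLpNorm (fun ω => ‖Y₀ ω‖) q μ :=
        eLpNorm_add_le hX₀.norm.1 hY₀.norm.1 (hr.trans (ENNReal.HolderTriple.le q q r))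
    _ = eLpNorm X₀ q μ + eLpNorm Y₀ q μ := by rw [eLpNorm_norm, eLpNorm_norm]

end SampleCovMajorant

theorem stmt11_general
    {Ω : Type*} [MeasurableSpace Ω] (μ : Measure Ω)
    {H : Type*} [NormedAddCommGroup H] [InnerProductSpace ℝ H]
    [MeasurableSpace H] [BorelSpace H] [SecondCountableTopology H]
    (e : HilbertBasis ℕ ℝ H)
    (p : ℝ) (hp : 2 ≤ p) (M : ℕ)
    (X₀ Y₀ : Ω → H)
    (hX₀ : MemLp X₀ (ENNReal.ofReal (2 * p)) μ)
    (hY₀ : MemLp Y₀ (ENNReal.ofReal (2 * p)) μ)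
    (X Y : Fin M → Ω → H)
    (hid : ∀ i, IdentDistrib (fun ω => (X i ω, Y i ω)) (fun ω => (X₀ ω, Y₀ ω)) μ μ) :
    lpNormHS μ e p (fun ω => sampleCov M X ω - sampleCov M Y ω)
      ≤ (2 * M / ((M : ℝ) - 1)) * lpNorm μ (2 * p) (fun ω => X₀ ω - Y₀ ω) *
          (lpNorm μ (2 * p) X₀ + lpNorm μ (2 * p) Y₀) := by
  have hp0 : 0 < p := by linarith
  have h2p : 0 < 2 * p := by linarith
  have := ENNReal.holderTriple_ofReal_two_mul hp0
  set c := (M : ℝ) / ((M : ℝ) - 1)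
  have hc : 0 ≤ c := natCast_div_natCast_sub_one_nonneg M
  set Q := ENNReal.ofReal (2 * p)
  have hND := (hX₀.sub hY₀).eLpNorm_ne_top
  have hNX := hX₀.eLpNorm_ne_top
  have hNY := hY₀.eLpNorm_ne_top
  calc lpNormHS μ e p (fun ω => sampleCov M X ω - sampleCov M Y ω)
      ≤ (eLpNorm (c • sampleCovMajorant M X Y) (ENNReal.ofReal p) μ).toReal :=
        lpNormHS_le_toReal_eLpNorm e hp0 ((memLp_sampleCovMajorant hX₀ hY₀ hid).const_smul c)
          (hsNorm_sampleCov_sub_le e M X Y)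
    _ = c * (eLpNorm (sampleCovMajorant M X Y) (ENNReal.ofReal p) μ).toReal := by
      rw [eLpNorm_const_smul, ENNReal.toReal_mul, toReal_enorm, Real.norm_of_nonneg hc]
    _ ≤ c * (2 * (eLpNorm (fun ω => X₀ ω - Y₀ ω) Q μ *
          (eLpNorm X₀ Q μ + eLpNorm Y₀ Q μ))).toReal := by
      gcongr
      · finiteness
      · exact eLpNorm_sampleCovMajorant_le (ENNReal.one_le_ofReal.mpr (by linarith)) hX₀ hY₀ hid
    _ = _ := by
      rw [lpNorm_eq_toReal_eLpNorm h2p hX₀, lpNorm_eq_toReal_eLpNorm h2p hY₀,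
        lpNorm_eq_toReal_eLpNorm h2p (u := fun ω => X₀ ω - Y₀ ω) (hX₀.sub hY₀),
        ENNReal.toReal_mul, ENNReal.toReal_mul, ENNReal.toReal_add hNX hNY]
      simp only [ENNReal.toReal_ofNat, c]
      ring

/-- for `M ≥ 2` and pairs `(X_i, Y_i)` each identically distributed with
`(X, Y)`, `X, Y ∈ L^{2p}(Ω;𝓗)` (no independence assumed),
`‖cov_M[X_·] − cov_M[Y_·]‖_{L^p(Ω;𝓗⊗𝓗)} ≤ (2M/(M−1)) ‖X−Y‖_{L^{2p}} (‖X‖_{L^{2p}} + ‖Y‖_{L^{2p}})`. -/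
theorem stmt11
    {Ω : Type*} [MeasurableSpace Ω] (μ : Measure Ω) [IsProbabilityMeasure μ]
    {H : Type*} [NormedAddCommGroup H] [InnerProductSpace ℝ H] [CompleteSpace H]
    [MeasurableSpace H] [BorelSpace H] [SecondCountableTopology H]
    (e : HilbertBasis ℕ ℝ H)
    (p : ℝ) (hp : 2 ≤ p) (M : ℕ) (hM : 2 ≤ M)
    (X₀ Y₀ : Ω → H)
    (hX₀ : MemLp X₀ (ENNReal.ofReal (2 * p)) μ)
    (hY₀ : MemLp Y₀ (ENNReal.ofReal (2 * p)) μ)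
    (X Y : Fin M → Ω → H)
    (hid : ∀ i, IdentDistrib (fun ω => (X i ω, Y i ω)) (fun ω => (X₀ ω, Y₀ ω)) μ μ) :
    lpNormHS μ e p (fun ω => sampleCov M X ω - sampleCov M Y ω)
      ≤ (2 * M / ((M : ℝ) - 1)) * lpNorm μ (2 * p) (fun ω => X₀ ω - Y₀ ω) *
          (lpNorm μ (2 * p) X₀ + lpNorm μ (2 * p) Y₀) :=
  stmt11_general μ e p hp M X₀ Y₀ hX₀ hY₀ X Y hid
end
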